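/- Let Σ be a d×d symmetric PSD matrix, let Π be the orthogonal projection onto the span of the top k eigenvectors of Σ (assuming λ_k(Σ) > λ_{k+1}(Σ)), and let Π̂ be any d×d orthogonal projection of rank k with ‖Π̂ - Π‖_2 ≤ φ. For 0 < γ̂ ≤ 1 let A = γ̂ Π̂ + (I - Π̂). Then ‖A Σ A‖_2 ≤ (γ̂ + φ)² λ_1(Σ) + 2(γ̂+φ)φ λ_1(Σ) + λ_{k+1}(Σ) + 2φ λ_{k+1}(Σ) + φ² λ_1(Σ). -/

import Mathlib

/-!
Split `Σ = Σ₁ + Σ₂` along `Π`, with `Σ₁ = Π Σ Π` carrying `λ₁, …, λ_k` and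
`Σ₂ = (I - Π) Σ (I - Π)` the remaining eigenvalues, so that
`A Σ A = (A Π) Σ₁ (Π A) + (A (I - Π)) Σ₂ ((I - Π) A)`.
Because `(I - Π̂) Π̂ = 0` we have `A Π = γ̂ Π̂ Π + (I - Π̂)(Π - Π̂)` and
`A (I - Π) = (I - Π̂)(I - Π) + γ̂ Π̂ (Π̂ - Π)`, hence `‖A Π‖ ≤ γ̂ + φ` and `‖A (I - Π)‖ ≤ 1 + γ̂ φ`;
the factors `Π A`, `(I - Π) A` are adjoints of these. Diagonalising in the orthonormal basis `v`
gives `‖Σ₁‖ ≤ λ₁` and `‖Σ₂‖ ≤ λ_{k+1}`.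
-/

open Matrix

noncomputable def specNorm {d : ℕ} (A : Matrix (Fin d) (Fin d) ℝ) : ℝ :=
  ‖Matrix.toEuclideanCLM (𝕜 := ℝ) A‖

section CStarRing

variable {E : Type*} [NormedRing E] [StarRing E] [CStarRing E]

lemma IsSelfAdjoint.norm_mul_comm {a b : E} (ha : IsSelfAdjoint a) (hb : IsSelfAdjoint b) :
    ‖a * b‖ = ‖b * a‖ := by
  rw [← norm_star, star_mul, ha.star_eq, hb.star_eq]

lemma norm_conjStarAlgAut (S : Type*) [SMul S E] [IsScalarTower S E E] [SMulCommClass S E E]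
    (u : unitary E) (x : E) : ‖Unitary.conjStarAlgAut S E u x‖ = ‖x‖ := by
  rw [Unitary.conjStarAlgAut_apply, CStarRing.norm_mul_mem_unitary _ (Unitary.star_mem u.2),
    CStarRing.norm_coe_unitary_mul]

lemma norm_mul_add_mul_le {a q s₁ s₂ : E} (ha : IsSelfAdjoint a) (hq : IsSelfAdjoint q)
    (hs₁ : q * s₁ * q = s₁) (hs₂ : (1 - q) * s₂ * (1 - q) = s₂) :
    ‖a * (s₁ + s₂) * a‖ ≤ ‖a * q‖ ^ 2 * ‖s₁‖ + ‖a * (1 - q)‖ ^ 2 * ‖s₂‖ := by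
  have hsplit : a * (s₁ + s₂) * a = a * q * s₁ * (q * a) + a * (1 - q) * s₂ * ((1 - q) * a) := by
    conv_lhs => rw [← hs₁, ← hs₂]
    noncomm_ring
  have hq' : IsSelfAdjoint (1 - q) := (IsSelfAdjoint.one E).sub hq
  calc ‖a * (s₁ + s₂) * a‖
      ≤ ‖a * q‖ * ‖s₁‖ * ‖q * a‖ + ‖a * (1 - q)‖ * ‖s₂‖ * ‖(1 - q) * a‖ :=
        hsplit ▸ (norm_add_le _ _).trans (add_le_add (norm_mul₃_le ..) (norm_mul₃_le ..))
    _ = ‖a * q‖ ^ 2 * ‖s₁‖ + ‖a * (1 - q)‖ ^ 2 * ‖s₂‖ := by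
        rw [hq.norm_mul_comm ha, hq'.norm_mul_comm ha]; ring

variable [NormedAlgebra ℝ E]

lemma IsStarProjection.norm_smul_add_smul_one_sub_mul_le {p q : E} (hp : IsStarProjection p)
    (hq : IsStarProjection q) (α β : ℝ) :
    ‖(α • p + β • (1 - p)) * q‖ ≤ |α| + |β| * ‖q - p‖ := by
  have hsplit : (α • p + β • (1 - p)) * q = α • (p * q) + β • ((1 - p) * (q - p)) := by
    rw [mul_sub, hp.one_sub_mul_self, sub_zero, add_mul, smul_mul_assoc, smul_mul_assoc]
  have hpq : ‖p * q‖ ≤ 1 :=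
    (norm_mul_le _ _).trans (mul_le_one₀ hp.norm_le (norm_nonneg _) hq.norm_le)
  calc ‖(α • p + β • (1 - p)) * q‖
      ≤ |α| * ‖p * q‖ + |β| * (‖1 - p‖ * ‖q - p‖) := by
        rw [hsplit]
        refine (norm_add_le _ _).trans (add_le_add (norm_smul _ _).le ?_)
        rw [norm_smul, Real.norm_eq_abs]
        exact mul_le_mul_of_nonneg_left (norm_mul_le _ _) (abs_nonneg _)
    _ ≤ |α| * 1 + |β| * (1 * ‖q - p‖) := by
        gcongr
        exact hp.one_sub.norm_le _
    _ = |α| + |β| * ‖q - p‖ := by ring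

lemma IsStarProjection.norm_preconditioner_mul_le {p q : E} (hp : IsStarProjection p)
    (hq : IsStarProjection q) {γ : ℝ} (hγ : 0 ≤ γ) :
    ‖(γ • p + (1 - p)) * q‖ ≤ γ + ‖q - p‖ := by
  simpa [abs_of_nonneg hγ] using hp.norm_smul_add_smul_one_sub_mul_le hq γ 1

lemma IsStarProjection.norm_preconditioner_mul_one_sub_le {p q : E} (hp : IsStarProjection p)
    (hq : IsStarProjection q) {γ : ℝ} (hγ : 0 ≤ γ) :
    ‖(γ • p + (1 - p)) * (1 - q)‖ ≤ 1 + γ * ‖q - p‖ := by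
  have h := hp.one_sub.norm_smul_add_smul_one_sub_mul_le hq.one_sub 1 γ
  rwa [sub_sub_cancel, one_smul, add_comm, abs_one, abs_of_nonneg hγ, sub_sub_sub_cancel_left,
    norm_sub_rev] at h

variable [StarModule ℝ E]

theorem IsStarProjection.norm_preconditioner_sandwich_le {p q s₁ s₂ : E}
    (hp : IsStarProjection p) (hq : IsStarProjection q) {γ : ℝ} (hγ : 0 ≤ γ)
    (hs₁ : q * s₁ * q = s₁) (hs₂ : (1 - q) * s₂ * (1 - q) = s₂) :
    ‖(γ • p + (1 - p)) * (s₁ + s₂) * (γ • p + (1 - p))‖ ≤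
      (γ + ‖q - p‖) ^ 2 * ‖s₁‖ + (1 + γ * ‖q - p‖) ^ 2 * ‖s₂‖ := by
  have ha : IsSelfAdjoint (γ • p + (1 - p)) :=
    ((IsSelfAdjoint.all γ).smul hp.isSelfAdjoint).add hp.one_sub.isSelfAdjoint
  refine (norm_mul_add_mul_le ha hq.isSelfAdjoint hs₁ hs₂).trans ?_
  gcongr
  · exact hp.norm_preconditioner_mul_le hq hγ
  · exact hp.norm_preconditioner_mul_one_sub_le hq hγ

end CStarRing

namespace Matrix

variable {n : Type*} [Fintype n] [DecidableEq n]

lemma isStarProjection_diagonal {α : Type*} [Semiring α] [StarRing α] {f : n → α}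
    (hf : ∀ i, IsStarProjection (f i)) : IsStarProjection (diagonal f) where
  isIdempotentElem := by
    rw [IsIdempotentElem, diagonal_mul_diagonal]
    exact congrArg diagonal (funext fun i => (hf i).isIdempotentElem)
  isSelfAdjoint := by
    rw [IsSelfAdjoint, star_eq_conjTranspose, diagonal_conjTranspose]
    exact congrArg diagonal (funext fun i => (hf i).isSelfAdjoint)

lemma transpose_of_mem_unitary {v : n → n → ℝ}
    (hv : ∀ i j, v i ⬝ᵥ v j = if i = j then 1 else 0) : (of v)ᵀ ∈ unitary (Matrix n n ℝ) := by
  have h : of v * (of v)ᵀ = 1 := by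
    ext i j
    simpa [mul_apply, one_apply, dotProduct] using hv i j
  rw [Unitary.mem_iff, star_eq_conjTranspose, conjTranspose_eq_transpose_of_trivial,
    transpose_transpose]
  exact ⟨h, mul_eq_one_comm.mp h⟩

lemma sum_smul_vecMulVec_eq_conjStarAlgAut {v : n → n → ℝ}
    (hv : ∀ i j, v i ⬝ᵥ v j = if i = j then 1 else 0) (s : Finset n) (c : n → ℝ) :
    ∑ i ∈ s, c i • vecMulVec (v i) (v i) =
      Unitary.conjStarAlgAut ℝ (Matrix n n ℝ) ⟨_, transpose_of_mem_unitary hv⟩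
        (diagonal fun i => if i ∈ s then c i else 0) := by
  ext j l
  simp only [Matrix.sum_apply, Matrix.smul_apply, vecMulVec_apply, smul_eq_mul,
    Unitary.conjStarAlgAut_apply, star_eq_conjTranspose, conjTranspose_eq_transpose_of_trivial,
    transpose_transpose, mul_apply, transpose_apply, of_apply, diagonal_apply, mul_ite, mul_zero,
    Finset.sum_ite_eq', Finset.mem_univ, ↓reduceIte, ite_mul, zero_mul, Finset.sum_ite_mem,
    Finset.univ_inter]
  exact Finset.sum_congr rfl fun i _ => by ring

open scoped Matrix.Norms.L2Operator

lemma norm_sum_smul_vecMulVec_le {v : n → n → ℝ}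
    (hv : ∀ i j, v i ⬝ᵥ v j = if i = j then 1 else 0) (s : Finset n) (c : n → ℝ) {b : ℝ}
    (hb : 0 ≤ b) (hc : ∀ i ∈ s, |c i| ≤ b) :
    ‖∑ i ∈ s, c i • vecMulVec (v i) (v i)‖ ≤ b := by
  rw [sum_smul_vecMulVec_eq_conjStarAlgAut hv, norm_conjStarAlgAut, l2_opNorm_diagonal,
    pi_norm_le_iff_of_nonneg hb]
  intro i
  split_ifs with hi
  · simpa using hc i hi
  · simpa using hb

theorem norm_preconditioner_mul_sum_mul_le {v : n → n → ℝ}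
    (hv : ∀ i j, v i ⬝ᵥ v j = if i = j then 1 else 0) (lam : n → ℝ) (s : Finset n)
    {b₁ b₂ : ℝ} (hb₁ : 0 ≤ b₁) (hb₂ : 0 ≤ b₂)
    (hlam₁ : ∀ i ∈ s, |lam i| ≤ b₁) (hlam₂ : ∀ i ∉ s, |lam i| ≤ b₂)
    {P : Matrix n n ℝ} (hP : IsStarProjection P) {γ : ℝ} (hγ : 0 ≤ γ) :
    ‖(γ • P + (1 - P)) * (∑ i, lam i • vecMulVec (v i) (v i)) * (γ • P + (1 - P))‖ ≤
      (γ + ‖P - ∑ i ∈ s, vecMulVec (v i) (v i)‖) ^ 2 * b₁ +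
        (1 + γ * ‖P - ∑ i ∈ s, vecMulVec (v i) (v i)‖) ^ 2 * b₂ := by
  set c := Unitary.conjStarAlgAut ℝ (Matrix n n ℝ) ⟨_, transpose_of_mem_unitary hv⟩
  have hc := sum_smul_vecMulVec_eq_conjStarAlgAut hv
  have hPr : ∑ i ∈ s, vecMulVec (v i) (v i) = c (diagonal fun i => if i ∈ s then 1 else 0) := by
    simpa only [Pi.one_apply, one_smul] using hc s 1
  have hq : IsStarProjection (∑ i ∈ s, vecMulVec (v i) (v i)) := by
    rw [hPr]
    refine (isStarProjection_diagonal fun i => ?_).map c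
    split_ifs
    exacts [.one ℝ, .zero ℝ]
  have hs₁ : (∑ i ∈ s, vecMulVec (v i) (v i)) * (∑ i ∈ s, lam i • vecMulVec (v i) (v i)) *
      (∑ i ∈ s, vecMulVec (v i) (v i)) = ∑ i ∈ s, lam i • vecMulVec (v i) (v i) := by
    rw [hPr, hc, ← map_mul, ← map_mul, diagonal_mul_diagonal, diagonal_mul_diagonal]
    congr 2 with i
    split_ifs <;> simp
  have hs₂ : (1 - ∑ i ∈ s, vecMulVec (v i) (v i)) * (∑ i ∈ sᶜ, lam i • vecMulVec (v i) (v i)) *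
      (1 - ∑ i ∈ s, vecMulVec (v i) (v i)) = ∑ i ∈ sᶜ, lam i • vecMulVec (v i) (v i) := by
    rw [hPr, hc, ← map_one c, ← map_sub, ← map_mul, ← map_mul, ← diagonal_one, diagonal_sub,
      diagonal_mul_diagonal, diagonal_mul_diagonal]
    congr 2 with i
    split_ifs <;> simp_all
  rw [← Finset.sum_add_sum_compl s, norm_sub_rev]
  refine (hP.norm_preconditioner_sandwich_le hq hγ hs₁ hs₂).trans ?_
  gcongr
  · exact norm_sum_smul_vecMulVec_le hv s lam hb₁ hlam₁
  · exact norm_sum_smul_vecMulVec_le hv sᶜ lam hb₂ fun i hi => hlam₂ i (Finset.mem_compl.mp hi)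

end Matrix

open scoped Matrix.Norms.L2Operator in
lemma specNorm_eq_norm {d : ℕ} (A : Matrix (Fin d) (Fin d) ℝ) : specNorm A = ‖A‖ := rfl

/-- Eigenvalues are 0-indexed: `lam ⟨0, _⟩ = λ_1` and `lam ⟨k, hk⟩ = λ_{k+1}`. -/
theorem coarse_preconditioner_spec_bound {d k : ℕ} (hk : k < d)
    (v : Fin d → (Fin d → ℝ))
    (hortho : ∀ i j, v i ⬝ᵥ v j = if i = j then (1 : ℝ) else 0)
    (lam : Fin d → ℝ) (hanti : Antitone lam) (hpos : ∀ i, 0 ≤ lam i)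
    (S : Matrix (Fin d) (Fin d) ℝ)
    (hS : S = ∑ i, lam i • vecMulVec (v i) (v i))
    (Pr Prh : Matrix (Fin d) (Fin d) ℝ)
    (hPr : Pr = ∑ i ∈ Finset.univ.filter (fun i : Fin d => (i : ℕ) < k),
      vecMulVec (v i) (v i))
    (hproj : Prh * Prh = Prh) (hsymm : Prhᵀ = Prh)
    (φ γh : ℝ) (hφ : specNorm (Prh - Pr) ≤ φ)
    (hγ : 0 < γh) (hγ1 : γh ≤ 1)
    (A : Matrix (Fin d) (Fin d) ℝ) (hA : A = γh • Prh + (1 - Prh)) :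
    specNorm (A * S * A) ≤
      (γh + φ) ^ 2 * lam ⟨0, Nat.lt_of_le_of_lt (Nat.zero_le k) hk⟩ +
        2 * (γh + φ) * φ * lam ⟨0, Nat.lt_of_le_of_lt (Nat.zero_le k) hk⟩ +
        lam ⟨k, hk⟩ + 2 * φ * lam ⟨k, hk⟩ +
        φ ^ 2 * lam ⟨0, Nat.lt_of_le_of_lt (Nat.zero_le k) hk⟩ := by
  have hPrh : IsStarProjection Prh :=
    ⟨hproj, by rw [IsSelfAdjoint, star_eq_conjTranspose, conjTranspose_eq_transpose_of_trivial,
      hsymm]⟩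
  have key := norm_preconditioner_mul_sum_mul_le hortho lam
    (Finset.univ.filter (fun i : Fin d => (i : ℕ) < k)) (hpos ⟨0, by omega⟩) (hpos ⟨k, hk⟩)
    (fun i _ => (abs_of_nonneg (hpos i)).trans_le (hanti (Fin.le_def.mpr (Nat.zero_le _))))
    (fun i hi => (abs_of_nonneg (hpos i)).trans_le (hanti (Fin.le_def.mpr (by simpa using hi))))
    hPrh hγ.le
  rw [← hS, ← hPr, ← hA] at key
  simp only [← specNorm_eq_norm] at key
  have hdist : 0 ≤ specNorm (Prh - Pr) := norm_nonneg _
  have hφ0 : 0 ≤ φ := hdist.trans hφ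
  have hγφ : γh * specNorm (Prh - Pr) ≤ φ := by nlinarith
  have hlam : lam ⟨k, hk⟩ ≤ lam ⟨0, by omega⟩ := hanti (Fin.le_def.mpr (Nat.zero_le _))
  calc specNorm (A * S * A)
      ≤ (γh + φ) ^ 2 * lam ⟨0, by omega⟩ + (1 + φ) ^ 2 * lam ⟨k, hk⟩ := by
        refine key.trans ?_
        gcongr <;> exact hpos _
    _ ≤ _ := by
        nlinarith [mul_le_mul_of_nonneg_left hlam (sq_nonneg φ),
          mul_nonneg (mul_nonneg (add_nonneg hγ.le hφ0) hφ0) (hpos ⟨0, by omega⟩)]
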